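/- arXiv:math/0511431 — 3 statements merged into one kernel-verified Lean document; each statement's English description precedes it below -/
import Mathlib

section
/- For 1 ≤ k ≤ n, the total number of cycles of length k appearing in the chain decompositions of all elements of IS_n equals (1/k) * [n]_k * |IS_{n-k}|. -/
def IsPInj (n : ℕ) (f : Fin n → Option (Fin n)) : Prop :=
  ∀ a b c, f a = some c → f b = some c → a = b

instance (n : ℕ) : DecidablePred (IsPInj n) := fun _ =>
  inferInstanceAs (Decidable (∀ _ _ _, _ → _ → _))

/-- The symmetric inverse semigroup `IS_n`: partial injective maps on `{1,…,n}`. -/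
def PInj (n : ℕ) := {f : Fin n → Option (Fin n) // IsPInj n f}

instance (n : ℕ) : Fintype (PInj n) := Subtype.fintype _

/-- `iterMap n f k x` is `f^k(x)` as a partial map. -/
def iterMap (n : ℕ) (f : Fin n → Option (Fin n)) : ℕ → Fin n → Option (Fin n)
  | 0, x => some x
  | k + 1, x => (f x).bind (iterMap n f k)

/-- Size of the domain of a partial injection. -/
def domCard (n : ℕ) (α : PInj n) : ℕ :=
  (Finset.univ.filter (fun x => α.val x ≠ none)).card

/-- `α` is nilpotent: some positive power is the empty map. -/
def Nilpotent (n : ℕ) (α : PInj n) : Prop :=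
  ∃ k, 0 < k ∧ ∀ x, iterMap n α.val k x = none

/-- `|IS_m| = ∑_j binom(m,j)^2 j!`. -/
def cardIS (m : ℕ) : ℕ := ∑ j ∈ Finset.range (m + 1), (m.choose j) ^ 2 * j.factorial


/-- `x : Fin k → Fin n` enumerates a cycle of length `k` of `α` starting at its
minimal point (so each cycle is enumerated exactly once). -/
def IsCycleOf (n k : ℕ) (α : PInj n) (x : Fin k → Fin n) : Prop :=
  Function.Injective x ∧
  (∀ i j : Fin k, (j : ℕ) = ((i : ℕ) + 1) % k → α.val (x i) = some (x j)) ∧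
  (∀ i j : Fin k, (i : ℕ) = 0 → x i ≤ x j)

/-!
Double count the pairs `(α, x)` where `x : Fin k → Fin n` is injective and `α` maps each `x i` to
`x (i + 1)`. For a fixed `x` such `α` are exactly the partial injections of the `n - k` points
outside the cycle, extended by the cycle, and there are `[n]_k` injective `x`. On the other hand,
rotating `x` is a free action of `Fin k` on these pairs, and each orbit contains exactly one `x`
starting at its minimum, which accounts for the factor `k`.
-/

/-- `PInj n` is definitionally `PartialInj (Fin n)`. -/
def PartialInj (β : Type*) :=
  {f : β → Option β // ∀ a b c, f a = some c → f b = some c → a = b}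

namespace PartialInj

variable {β γ ι : Type*}

def congr (e : β ≃ γ) : PartialInj β ≃ PartialInj γ :=
  (Equiv.arrowCongr e (Equiv.optionCongr e)).subtypeEquiv fun f => by
    simp only [Equiv.arrowCongr_apply, Function.comp_apply, Equiv.optionCongr_apply,
      Option.map_eq_some_iff, e.symm.forall_congr_left, Equiv.symm_symm,
      Equiv.symm_apply_apply, e.apply_eq_iff_eq, exists_eq_right]

lemma inj (f : PartialInj β) {a b c : β} (ha : f.1 a = some c) (hb : f.1 b = some c) : a = b :=
  f.2 a b c ha hb

section Extending

variable (x : ι ↪ β) (σ : Equiv.Perm ι)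

abbrev Extending := {f : PartialInj β // ∀ i, f.1 (x i) = some (x (σ i))}

variable {x σ}

lemma apply_notMem_range (f : Extending x σ) {c w : β} (hc : c ∉ Set.range x)
    (hcw : f.1.1 c = some w) : w ∉ Set.range x := by
  rintro ⟨j, rfl⟩
  refine hc ⟨σ.symm j, f.1.inj ?_ hcw⟩
  rw [f.2, σ.apply_symm_apply]

variable (x σ)

def restrictCompl (f : Extending x σ) : PartialInj ↥(Set.range x)ᶜ :=
  ⟨fun c => (f.1.1 c).pmap Subtype.mk fun _ hw => apply_notMem_range f c.2 hw, by
    intro a b c ha hb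
    simp only [Option.pmap_eq_some_iff] at ha hb
    obtain ⟨w, _, hw, rfl⟩ := ha
    obtain ⟨w', _, hw', hww'⟩ := hb
    obtain rfl : w = w' := congrArg Subtype.val hww'
    exact Subtype.ext (f.1.inj hw hw')⟩

open Classical in
noncomputable def extendCompl (g : PartialInj ↥(Set.range x)ᶜ) : Extending x σ :=
  ⟨⟨fun z =>
      if h : z ∈ Set.range x then some (x (σ ((Equiv.ofInjective x x.injective).symm ⟨z, h⟩)))
      else (g.1 ⟨z, h⟩).map Subtype.val, by
    intro a b c ha hb
    dsimp only at ha hb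
    split_ifs at ha hb with hra hrb hrb
    · obtain ⟨i, rfl⟩ := hra
      obtain ⟨j, rfl⟩ := hrb
      simp only [Equiv.ofInjective_symm_apply, Option.some_inj] at ha hb
      rw [σ.injective (x.injective (ha.trans hb.symm))]
    · obtain ⟨d, -, rfl⟩ := Option.map_eq_some_iff.1 hb
      exact absurd ⟨_, Option.some_inj.1 ha⟩ d.2
    · obtain ⟨d, -, rfl⟩ := Option.map_eq_some_iff.1 ha
      exact absurd ⟨_, Option.some_inj.1 hb⟩ d.2
    · obtain ⟨d, hd, rfl⟩ := Option.map_eq_some_iff.1 ha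
      obtain ⟨d', hd', hdd'⟩ := Option.map_eq_some_iff.1 hb
      obtain rfl := Subtype.ext hdd'
      exact congrArg Subtype.val (g.inj hd hd')⟩, by
    intro i
    simp⟩

noncomputable def extendingEquiv : Extending x σ ≃ PartialInj ↥(Set.range x)ᶜ where
  toFun := restrictCompl x σ
  invFun := extendCompl x σ
  left_inv f := by
    apply Subtype.ext; apply Subtype.ext; funext z
    by_cases hz : z ∈ Set.range x
    · obtain ⟨i, rfl⟩ := hz
      simp [extendCompl, f.2]
    · simp only [extendCompl, restrictCompl, dif_neg hz, Option.map_pmap, Option.pmap_eq_map,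
        Option.map_id']
  right_inv g := by
    apply Subtype.ext; funext c
    simp only [extendCompl, restrictCompl, dif_neg c.2]
    rw [Option.pmap_map]
    exact (Option.pmap_eq_map _ id _ _).trans Option.map_id'

theorem card_extending [Fintype ι] [Fintype β] :
    Nat.card (Extending x σ) = Nat.card (PartialInj (Fin (Fintype.card β - Fintype.card ι))) := by
  classical
  have hcard : Fintype.card ↥(Set.range x)ᶜ = Fintype.card β - Fintype.card ι := by
    rw [Fintype.card_compl_set, Set.card_range_of_injective x.injective]
  exact Nat.card_congr ((extendingEquiv x σ).trans (congr (Fintype.equivFinOfCardEq hcard)))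

end Extending

end PartialInj

section Rotation

variable {β γ : Type*} {k : ℕ}

def rotate (x : Fin k → β) (i : Fin k) : Fin k → β := fun j => x (j + i)

@[simp]
lemma rotate_apply (x : Fin k → β) (i j : Fin k) : rotate x i j = x (j + i) := rfl

lemma rotate_rotate (x : Fin k → β) (i j : Fin k) : rotate (rotate x i) j = rotate x (j + i) := by
  funext l
  simp [add_assoc]

lemma rotate_zero [NeZero k] (x : Fin k → β) : rotate x 0 = x := by
  funext l
  simp

lemma Function.Injective.rotate {x : Fin k → β} (hx : Function.Injective x) (i : Fin k) :
    Function.Injective (rotate x i) :=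
  hx.comp (add_left_injective i)

-- Both rotations carry the common minimum of `x` and `x'` to position `-i = -i'`.
lemma eq_of_rotate_eq [LinearOrder β] [NeZero k] {x x' : Fin k → β} (hx' : Function.Injective x')
    (hmin : ∀ j, x 0 ≤ x j) (hmin' : ∀ j, x' 0 ≤ x' j) {i i' : Fin k}
    (h : rotate x i = rotate x' i') : i = i' ∧ x = x' := by
  have h₁ : x 0 = x' (-i + i') := by simpa using congrFun h (-i)
  have h₂ : x (-i' + i) = x' 0 := by simpa using congrFun h (-i')
  have hx'0 : x' 0 = x' (-i + i') := le_antisymm (hmin' _) (h₁ ▸ h₂ ▸ hmin _)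
  obtain rfl : i = i' := neg_add_eq_zero.1 (hx' hx'0).symm
  refine ⟨rfl, funext fun j => ?_⟩
  simpa using congrFun h (j - i)

theorem card_eq_card_minAtZero_mul [LinearOrder β] [NeZero k] {P : γ → (Fin k → β) → Prop}
    (hinj : ∀ c x, P c x → Function.Injective x) (hrot : ∀ c x i, P c x → P c (rotate x i)) :
    Nat.card {p : γ × (Fin k → β) // P p.1 p.2} =
      Nat.card {p : γ × (Fin k → β) // P p.1 p.2 ∧ ∀ j, p.2 0 ≤ p.2 j} * k := by
  let φ : {p : γ × (Fin k → β) // P p.1 p.2 ∧ ∀ j, p.2 0 ≤ p.2 j} × Fin k →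
      {p : γ × (Fin k → β) // P p.1 p.2} :=
    fun q => ⟨(q.1.1.1, rotate q.1.1.2 q.2), hrot _ _ _ q.1.2.1⟩
  have hφ : Function.Bijective φ := by
    constructor
    · rintro ⟨⟨⟨c, x⟩, hP, hmin⟩, i⟩ ⟨⟨⟨c', x'⟩, hP', hmin'⟩, i'⟩ h
      simp only [φ, Subtype.mk.injEq, Prod.mk.injEq] at h
      obtain ⟨rfl, h⟩ := h
      obtain ⟨rfl, rfl⟩ := eq_of_rotate_eq (hinj _ _ hP') hmin hmin' h
      rfl
    · rintro ⟨⟨c, y⟩, hP⟩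
      obtain ⟨i₀, hi₀⟩ := Finite.exists_min y
      refine ⟨⟨⟨⟨c, rotate y i₀⟩, hrot _ _ _ hP, fun j => by simpa using hi₀ _⟩, -i₀⟩, ?_⟩
      simp [φ, rotate_rotate, rotate_zero]
  rw [← Nat.card_congr (Equiv.ofBijective φ hφ), Nat.card_prod,
    Nat.card_eq_fintype_card (α := Fin k), Fintype.card_fin]

end Rotation

section Cycles

variable {β : Type*} {k : ℕ} [NeZero k]

def MapsCyclically (f : β → Option β) (x : Fin k → β) : Prop :=
  ∀ i, f (x i) = some (x (i + 1))

lemma MapsCyclically.rotate {f : β → Option β} {x : Fin k → β} (h : MapsCyclically f x)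
    (i : Fin k) : MapsCyclically f (rotate x i) := by
  intro j
  simpa [add_right_comm] using h (j + i)

end Cycles

lemma isCycleOf_iff {n k : ℕ} [NeZero k] {α : PInj n} {x : Fin k → Fin n} :
    IsCycleOf n k α x ↔ (Function.Injective x ∧ MapsCyclically α.val x) ∧ ∀ j, x 0 ≤ x j := by
  have hsucc : ∀ i j : Fin k, (j : ℕ) = ((i : ℕ) + 1) % k ↔ j = i + 1 := fun i j => by
    rw [Fin.ext_iff, Fin.val_add, Fin.val_one', Nat.add_mod_mod]
  simp only [IsCycleOf, MapsCyclically, hsucc, forall_eq, Fin.val_eq_zero_iff, and_assoc]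
  exact and_congr_right' (and_congr_right' ⟨fun h j => h 0 j rfl, fun h i j hi => hi ▸ h j⟩)

lemma card_mapsCyclically {n k : ℕ} [NeZero k] (x : Fin k ↪ Fin n) :
    Nat.card {α : PInj n // MapsCyclically α.val x} = Nat.card (PInj (n - k)) := by
  have := PartialInj.card_extending x (Equiv.addRight 1)
  rwa [Fintype.card_fin, Fintype.card_fin] at this

theorem card_injective_mapsCyclically (n k : ℕ) [NeZero k] :
    Nat.card {p : PInj n × (Fin k → Fin n) // Function.Injective p.2 ∧ MapsCyclically p.1.val p.2} =
      n.descFactorial k * Nat.card (PInj (n - k)) := by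
  let e : {p : PInj n × (Fin k → Fin n) // Function.Injective p.2 ∧ MapsCyclically p.1.val p.2} ≃
      Σ x : Fin k ↪ Fin n, {α : PInj n // MapsCyclically α.val x} :=
    { toFun p := ⟨⟨p.1.2, p.2.1⟩, p.1.1, p.2.2⟩
      invFun q := ⟨(q.2.1, q.1), q.1.injective, q.2.2⟩
      left_inv _ := rfl
      right_inv _ := rfl }
  rw [Nat.card_congr e, Nat.card_sigma]
  simp only [card_mapsCyclically, Finset.sum_const, Finset.card_univ, Fintype.card_embedding_eq,
    Fintype.card_fin, smul_eq_mul]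

theorem stmt5_general (n k : ℕ) (h1 : 1 ≤ k) :
    k * Set.ncard {p : PInj n × (Fin k → Fin n) | IsCycleOf n k p.1 p.2}
      = n.descFactorial k * Nat.card (PInj (n - k)) := by
  have : NeZero k := ⟨by omega⟩
  have hrot := card_eq_card_minAtZero_mul (γ := PInj n)
    (P := fun (α : PInj n) (x : Fin k → Fin n) =>
      Function.Injective x ∧ MapsCyclically α.val x)
    (fun _ _ h => h.1) (fun _ _ i h => ⟨h.1.rotate i, h.2.rotate i⟩)
  rw [card_injective_mapsCyclically] at hrot
  rw [hrot, mul_comm, ← Nat.card_coe_set_eq]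
  exact congrArg (· * k) (Nat.card_congr (Equiv.subtypeEquivRight fun _ => isCycleOf_iff))

theorem stmt5 (n k : ℕ) (h1 : 1 ≤ k) (h2 : k ≤ n) :
    k * Set.ncard {p : PInj n × (Fin k → Fin n) | IsCycleOf n k p.1 p.2}
      = n.descFactorial k * Nat.card (PInj (n - k)) :=
  stmt5_general n k h1
end

section
/- For every n ≥ 1: (1/n) * sum over k from 1 to n of (k * binom(n,k)^2 * k! + [n]_k * |IS_{n-k}|) = |IS_n|, where |IS_m| = sum_j binom(m,j)^2 * j! and [n]_k is the falling factorial. -/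
/-!
`∑ₖ k R_{n,k}` is the total rank of `IS_n`, and `defectSum n = ∑ₖ (n - k) R_{n,k}` its total
defect, so together they give `n |IS_n|`. It remains to identify the total defect with the number
of chains `chainSum n = ∑_{k ≥ 1} [n]_k |IS_{n-k}|`: both vanish at `0` and satisfy
`a (m + 1) = (m + 1) (|IS_m| + a m)`. For `chainSum` this is `[m+1]_{k+1} = (m + 1) [m]_k`; for
`defectSum` it follows from `(m + 1 - k) C(m+1,k) = (m + 1) C(m,k)` and Pascal's rule.
-/

open Finset Nat

theorem Finset.sum_Icc_one_eq_sum_range {M : Type*} [AddCommMonoid M] (f : ℕ → M) (m : ℕ) :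
    ∑ k ∈ Icc 1 m, f k = ∑ j ∈ range m, f (j + 1) := by
  rw [← Ico_add_one_right_eq_Icc, sum_Ico_eq_sum_range, add_tsub_cancel_right]
  simp only [add_comm]

def defectSum (m : ℕ) : ℕ := ∑ k ∈ range (m + 1), (m - k) * (m.choose k ^ 2 * k !)

def chainSum (m : ℕ) : ℕ := ∑ k ∈ Icc 1 m, m.descFactorial k * cardIS (m - k)

theorem chainSum_succ (m : ℕ) : chainSum (m + 1) = (m + 1) * (cardIS m + chainSum m) := by
  have hterm (j : ℕ) : (m + 1).descFactorial (j + 1) * cardIS (m + 1 - (j + 1)) =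
      (m + 1) * (m.descFactorial j * cardIS (m - j)) := by
    rw [succ_descFactorial_succ, Nat.add_sub_add_right, Nat.mul_assoc]
  rw [chainSum, chainSum, sum_Icc_one_eq_sum_range, sum_Icc_one_eq_sum_range, sum_range_succ']
  simp_rw [hterm]
  rw [← mul_sum, descFactorial_zero, one_mul, Nat.sub_zero, mul_add, add_comm]

theorem Nat.choose_mul_choose_succ_mul_factorial (m j : ℕ) :
    m.choose j * m.choose (j + 1) * (j + 1)! = (m - j) * (m.choose j ^ 2 * j !) :=
  calc m.choose j * m.choose (j + 1) * (j + 1)!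
      = m.choose j * (m.choose (j + 1) * (j + 1)) * j ! := by rw [factorial_succ]; ring
    _ = m.choose j * (m.choose j * (m - j)) * j ! := by rw [choose_succ_right_eq]
    _ = (m - j) * (m.choose j ^ 2 * j !) := by ring

theorem cardIS_eq_sum_range_add_two (m : ℕ) :
    cardIS m = ∑ k ∈ range (m + 2), m.choose k ^ 2 * k ! := by
  rw [cardIS, sum_range_succ _ (m + 1), choose_succ_self, zero_pow two_ne_zero, zero_mul,
    add_zero]

theorem defectSum_succ (m : ℕ) : defectSum (m + 1) = (m + 1) * (cardIS m + defectSum m) := by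
  have hfactor : defectSum (m + 1) =
      (m + 1) * ∑ k ∈ range (m + 2), m.choose k * (m + 1).choose k * k ! := by
    rw [defectSum, mul_sum]
    refine sum_congr rfl fun k _ => ?_
    calc (m + 1 - k) * ((m + 1).choose k ^ 2 * k !)
        = ((m + 1).choose k * (m + 1 - k)) * ((m + 1).choose k * k !) := by ring
      _ = (m.choose k * (m + 1)) * ((m + 1).choose k * k !) := by rw [choose_mul_succ_eq]
      _ = (m + 1) * (m.choose k * (m + 1).choose k * k !) := by ring
  have hsplit : ∑ k ∈ range (m + 2), m.choose k * (m + 1).choose k * k ! =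
      cardIS m + defectSum m := by
    rw [cardIS_eq_sum_range_add_two, defectSum, sum_range_succ', sum_range_succ' _ (m + 1),
      add_right_comm, ← sum_add_distrib]
    congr 1
    · refine sum_congr rfl fun j _ => ?_
      rw [choose_succ_succ', ← choose_mul_choose_succ_mul_factorial]
      ring
    · simp
  rw [hfactor, hsplit]

theorem defectSum_eq_chainSum (m : ℕ) : defectSum m = chainSum m := by
  induction m with
  | zero => rfl
  | succ m ih => rw [defectSum_succ, chainSum_succ, ih]

theorem sum_rank_add_defectSum (n : ℕ) :
    ∑ k ∈ range (n + 1), k * (n.choose k ^ 2 * k !) + defectSum n = n * cardIS n := by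
  rw [defectSum, cardIS, ← sum_add_distrib, mul_sum]
  refine sum_congr rfl fun k hk => ?_
  rw [← add_mul, Nat.add_sub_cancel' (mem_range_succ_iff.mp hk)]

theorem stmt7 (n : ℕ) (h : 1 ≤ n) :
    (1 / (n : ℚ)) * ∑ k ∈ Finset.Icc 1 n,
        ((k * ((n.choose k) ^ 2 * k.factorial) + n.descFactorial k * cardIS (n - k) : ℕ) : ℚ)
      = (cardIS n : ℚ) := by
  have hsum : ∑ k ∈ Icc 1 n, (k * (n.choose k ^ 2 * k !) + n.descFactorial k * cardIS (n - k)) =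
      n * cardIS n := by
    rw [sum_add_distrib, ← chainSum, ← defectSum_eq_chainSum, ← sum_rank_add_defectSum,
      sum_range_succ', sum_Icc_one_eq_sum_range, zero_mul, add_zero]
  rw [← Nat.cast_sum, hsum, Nat.cast_mul, one_div, inv_mul_cancel_left₀
    (Nat.cast_ne_zero.mpr (one_le_iff_ne_zero.mp h))]
end

section
/- The number of elements α in IS_n with 1 not in dom(α) equals the number of nilpotent elements of IS_n. -/
/-!
A partial injection of `Fin n` is a disjoint union of cycles and chains. Fix a base point `b`.
As long as cycles remain, cut open the cycle through the largest cyclic point `m` right after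
`m` and append it to the end of the chain starting at `b`, which then ends at `m`. Starting
from a map with `b ∉ dom`, after at most `n` steps no cycle is left: the map is nilpotent.
Throughout, every cyclic point lies below the end of the chain (`Admissible`), so the appended
blocks have decreasing maxima and the last one is the part of the chain after its last point
exceeding the end; closing it into a cycle undoes the step. Iterating the two operations gives
inverse bijections between the maps with `b ∉ dom` and the nilpotent ones.
-/

section IterateBijection

open Set Function

variable {α : Type*} {S : Set α} {F G : α → α} {P Q : α → Prop}

theorem not_iterate_of_measure_lt (hFS : MapsTo F S S) (hF : ∀ x, ¬ P x → F x = x)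
    (μ : α → ℕ) (hμ : ∀ x ∈ S, P x → μ (F x) < μ x) :
    ∀ k, ∀ x ∈ S, μ x ≤ k → ¬ P (F^[k] x) := by
  intro k
  induction k with
  | zero => exact fun x hx h0 hP => by have := hμ x hx hP; omega
  | succ k ih =>
    intro x hx hk
    by_cases hP : P x
    · rw [iterate_succ_apply]
      exact ih (F x) (hFS hx) (by have := hμ x hx hP; omega)
    · rwa [iterate_fixed (hF x hP)]

theorem iterate_iterate_eq_self (hFS : MapsTo F S S) (hF : ∀ x, ¬ P x → F x = x)
    (hG : ∀ x, ¬ Q x → G x = x) (hGF : ∀ x ∈ S, P x → G (F x) = x)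
    {x : α} (hx : x ∈ S) (hQ : ¬ Q x) (k : ℕ) : G^[k] (F^[k] x) = x := by
  induction k with
  | zero => rfl
  | succ k ih =>
    set y := F^[k] x
    rw [iterate_succ_apply' F]
    by_cases hP : P y
    · rw [iterate_succ_apply, hGF y (hFS.iterate k hx) hP, ih]
    · rw [hF y hP, iterate_succ_apply', ih, hG x hQ]

/-- The `F`-orbits in `S` are chains running from a point where `G` is idle to one where `F` is
idle, and `G` walks them backwards. -/
theorem bijOn_iterate (hFS : MapsTo F S S) (hGS : MapsTo G S S)
    (hF : ∀ x, ¬ P x → F x = x) (hG : ∀ x, ¬ Q x → G x = x)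
    (hGF : ∀ x ∈ S, P x → G (F x) = x) (hFG : ∀ x ∈ S, Q x → F (G x) = x)
    (μ ν : α → ℕ) (hμ : ∀ x ∈ S, P x → μ (F x) < μ x)
    (hν : ∀ x ∈ S, Q x → ν (G x) < ν x)
    {N : ℕ} (hμN : ∀ x ∈ S, μ x ≤ N) (hνN : ∀ x ∈ S, ν x ≤ N) :
    BijOn F^[N] {x ∈ S | ¬ Q x} {x ∈ S | ¬ P x} :=
  InvOn.bijOn
    ⟨fun _ hx => iterate_iterate_eq_self hFS hF hG hGF hx.1 hx.2 N,
      fun _ hx => iterate_iterate_eq_self hGS hG hF hFG hx.1 hx.2 N⟩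
    (fun x hx => ⟨hFS.iterate N hx.1,
      not_iterate_of_measure_lt hFS hF μ hμ N x hx.1 (hμN x hx.1)⟩)
    (fun x hx => ⟨hGS.iterate N hx.1,
      not_iterate_of_measure_lt hGS hG ν hν N x hx.1 (hνN x hx.1)⟩)

end IterateBijection

section IterMap

variable {n : ℕ} (f : Fin n → Option (Fin n))

@[simp] theorem iterMap_zero (x : Fin n) : iterMap n f 0 x = some x := rfl

theorem iterMap_succ (k : ℕ) (x : Fin n) :
    iterMap n f (k + 1) x = (f x).bind (iterMap n f k) := rfl

theorem iterMap_add (j k : ℕ) (x : Fin n) :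
    iterMap n f (j + k) x = (iterMap n f j x).bind (iterMap n f k) := by
  induction j generalizing x with
  | zero => simp
  | succ j ih =>
    rw [Nat.add_right_comm, iterMap_succ, iterMap_succ]
    cases f x <;> simp [ih]

theorem iterMap_one (x : Fin n) : iterMap n f 1 x = f x := by
  rw [iterMap_succ]; cases f x <;> rfl

theorem iterMap_succ' (k : ℕ) (x : Fin n) :
    iterMap n f (k + 1) x = (iterMap n f k x).bind f := by
  rw [iterMap_add]; cases iterMap n f k x <;> simp [iterMap_one]

theorem exists_iterMap_eq_some_of_le {x w : Fin n} {i j : ℕ} (hij : i ≤ j)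
    (hj : iterMap n f j x = some w) : ∃ v, iterMap n f i x = some v := by
  obtain ⟨l, rfl⟩ := Nat.exists_eq_add_of_le hij
  rw [iterMap_add] at hj
  obtain ⟨v, hv, -⟩ := Option.bind_eq_some_iff.mp hj
  exact ⟨v, hv⟩

theorem iterMap_mul_eq_self {x : Fin n} {p : ℕ} (hp : iterMap n f p x = some x) (q : ℕ) :
    iterMap n f (q * p) x = some x := by
  induction q with
  | zero => simp
  | succ q ih => rw [Nat.succ_mul, iterMap_add, ih, Option.bind_some, hp]

variable {f} in
theorem iterMap_congr {g : Fin n → Option (Fin n)} {x : Fin n} {K : ℕ}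
    (hfg : ∀ i < K, ∀ w, iterMap n f i x = some w → g w = f w) :
    ∀ i ≤ K, iterMap n g i x = iterMap n f i x := by
  intro i hi
  induction i with
  | zero => rfl
  | succ i ih =>
    rw [iterMap_succ', iterMap_succ', ih (by omega)]
    cases hw : iterMap n f i x with
    | none => rfl
    | some w => exact hfg i (by omega) w hw

def OnCycle (x : Fin n) : Prop :=
  ∃ k, 0 < k ∧ iterMap n f k x = some x

variable {f}

theorem onCycle_of_iterMap_eq {x w : Fin n} {i j : ℕ} (hij : i < j)
    (hi : iterMap n f i x = some w) (hj : iterMap n f j x = some w) : OnCycle f w := by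
  refine ⟨j - i, by omega, ?_⟩
  rwa [← Nat.add_sub_cancel' hij.le, iterMap_add, hi, Option.bind_some] at hj

namespace OnCycle

variable {x : Fin n} (hx : OnCycle f x)
include hx

theorem exists_iterMap_eq_some (k : ℕ) : ∃ v, iterMap n f k x = some v := by
  obtain ⟨d, hd, hxd⟩ := hx
  exact exists_iterMap_eq_some_of_le f (Nat.le_mul_of_pos_right k hd)
    (iterMap_mul_eq_self f hxd k)

theorem isSome_apply : (f x).isSome := by
  obtain ⟨v, hv⟩ := hx.exists_iterMap_eq_some 1
  rw [← iterMap_one f x, hv]; rfl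

theorem of_apply_eq_some {y : Fin n} (hxy : f x = some y) : OnCycle f y := by
  obtain ⟨k, hk, hxk⟩ := hx
  refine ⟨k, hk, ?_⟩
  have h := iterMap_succ' f k x
  rwa [hxk, Option.bind_some, hxy, iterMap_succ, hxy, Option.bind_some] at h

theorem of_iterMap_eq_some {w : Fin n} {k : ℕ} (hw : iterMap n f k x = some w) :
    OnCycle f w := by
  induction k generalizing x with
  | zero => cases hw; exact hx
  | succ k ih =>
    rw [iterMap_succ] at hw
    obtain ⟨y, hy, hyw⟩ := Option.bind_eq_some_iff.mp hw
    exact ih (hx.of_apply_eq_some hy) hyw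

theorem exists_iterMap_eq_some_of_iterMap_eq_some {w : Fin n} {l : ℕ}
    (hw : iterMap n f l x = some w) : ∃ l', iterMap n f l' w = some x := by
  obtain ⟨p, hp, hxp⟩ := hx
  refine ⟨(l + 1) * p - l, ?_⟩
  have h := iterMap_mul_eq_self f hxp (l + 1)
  rwa [← Nat.add_sub_cancel' (show l ≤ (l + 1) * p by nlinarith), iterMap_add, hw,
    Option.bind_some] at h

end OnCycle

theorem not_onCycle_of_iterMap_eq_none {x : Fin n} {k : ℕ} (hk : iterMap n f k x = none) :
    ¬ OnCycle f x := fun hx => by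
  obtain ⟨v, hv⟩ := hx.exists_iterMap_eq_some k
  simp [hk] at hv

theorem not_onCycle_of_iterMap_eq_some_of_eq_none {x w : Fin n} {i j : ℕ}
    (hi : iterMap n f i x = some w) (hj : iterMap n f j x = none) : ¬ OnCycle f w := by
  intro hw
  rcases le_or_gt j i with hji | hij
  · obtain ⟨v, hv⟩ := exists_iterMap_eq_some_of_le f hji hi
    simp [hj] at hv
  · obtain ⟨v, hv⟩ := hw.exists_iterMap_eq_some (j - i)
    rw [← Nat.add_sub_cancel' hij.le, iterMap_add, hi, Option.bind_some, hv] at hj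
    simp at hj

theorem iterMap_eq_none_of_not_onCycle {x : Fin n}
    (hx : ∀ i w, iterMap n f i x = some w → ¬ OnCycle f w) : iterMap n f n x = none := by
  by_contra hn
  obtain ⟨v, hv⟩ := Option.ne_none_iff_exists'.mp hn
  have hinj : Function.Injective fun i : Fin (n + 1) => (iterMap n f i x).getD x := by
    rintro ⟨i, hi⟩ ⟨j, hj⟩ hij
    obtain ⟨u, hu⟩ := exists_iterMap_eq_some_of_le f (Nat.lt_succ_iff.mp hi) hv
    obtain ⟨u', hu'⟩ := exists_iterMap_eq_some_of_le f (Nat.lt_succ_iff.mp hj) hv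
    simp only [hu, hu', Option.getD_some] at hij
    subst hij
    rcases Nat.lt_trichotomy i j with h | h | h
    · exact absurd (onCycle_of_iterMap_eq h hu hu') (hx i u hu)
    · exact Fin.ext h
    · exact absurd (onCycle_of_iterMap_eq h hu' hu) (hx j u hu')
  simpa using Fintype.card_le_of_injective _ hinj

variable (f) in
noncomputable def period (x : Fin n) : ℕ :=
  sInf {k | 0 < k ∧ iterMap n f k x = some x}

theorem OnCycle.period_pos {x : Fin n} (hx : OnCycle f x) : 0 < period f x :=
  (Nat.sInf_mem hx).1

theorem OnCycle.iterMap_period {x : Fin n} (hx : OnCycle f x) :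
    iterMap n f (period f x) x = some x :=
  (Nat.sInf_mem hx).2

theorem iterMap_ne_self_of_lt_period {x : Fin n} {i : ℕ} (h0 : 0 < i) (hi : i < period f x) :
    iterMap n f i x ≠ some x :=
  fun h => Nat.notMem_of_lt_sInf hi ⟨h0, h⟩

variable (f) in
noncomputable def cyclePoints : Finset (Fin n) := by
  classical exact Finset.univ.filter (OnCycle f)

@[simp] theorem mem_cyclePoints {x : Fin n} : x ∈ cyclePoints f ↔ OnCycle f x := by
  simp [cyclePoints]

theorem iterMap_eq_none_of_cyclePoints_eq_empty (h : cyclePoints f = ∅) (x : Fin n) :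
    iterMap n f n x = none :=
  iterMap_eq_none_of_not_onCycle fun _ w _ hw => by simpa [h] using mem_cyclePoints.mpr hw

end IterMap

section Path

variable {n : ℕ} (b : Fin n) (f : Fin n → Option (Fin n))

noncomputable def pathLength : ℕ := sInf {k | iterMap n f k b = none}

noncomputable def lastIndex : ℕ := pathLength b f - 1

noncomputable def pathEnd : Fin n := (iterMap n f (lastIndex b f) b).getD b

variable {b f}

theorem iterMap_pathLength (hb : ∃ k, iterMap n f k b = none) :
    iterMap n f (pathLength b f) b = none :=
  Nat.sInf_mem hb

theorem exists_iterMap_eq_some_of_lt_pathLength {i : ℕ} (hi : i < pathLength b f) :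
    ∃ v, iterMap n f i b = some v :=
  Option.ne_none_iff_exists'.mp (Nat.notMem_of_lt_sInf hi)

theorem pathLength_eq {K : ℕ} (hK : iterMap n f K b = none)
    (hlt : ∀ i < K, ∃ v, iterMap n f i b = some v) : pathLength b f = K := by
  refine le_antisymm (Nat.sInf_le hK) (not_lt.mp fun h => ?_)
  obtain ⟨v, hv⟩ := hlt _ h
  rw [iterMap_pathLength ⟨K, hK⟩] at hv
  cases hv

theorem lastIndex_add_one (hb : ∃ k, iterMap n f k b = none) :
    lastIndex b f + 1 = pathLength b f := by
  have : pathLength b f ≠ 0 := fun h => by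
    have := iterMap_pathLength hb
    rw [h, iterMap_zero] at this
    cases this
  unfold lastIndex; omega

theorem iterMap_lastIndex (hb : ∃ k, iterMap n f k b = none) :
    iterMap n f (lastIndex b f) b = some (pathEnd b f) := by
  obtain ⟨v, hv⟩ := exists_iterMap_eq_some_of_lt_pathLength (i := lastIndex b f)
    (by rw [← lastIndex_add_one hb]; omega)
  rw [pathEnd, hv, Option.getD_some]

theorem apply_pathEnd (hb : ∃ k, iterMap n f k b = none) : f (pathEnd b f) = none := by
  have h := iterMap_pathLength hb
  rwa [← lastIndex_add_one hb, iterMap_succ', iterMap_lastIndex hb, Option.bind_some] at h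

theorem not_onCycle_of_iterMap_base (hb : ∃ k, iterMap n f k b = none) {i : ℕ} {w : Fin n}
    (hw : iterMap n f i b = some w) : ¬ OnCycle f w :=
  not_onCycle_of_iterMap_eq_some_of_eq_none hw (iterMap_pathLength hb)

theorem iterMap_base_inj (hb : ∃ k, iterMap n f k b = none) {i j : ℕ} {w : Fin n}
    (hi : iterMap n f i b = some w) (hj : iterMap n f j b = some w) : i = j := by
  rcases Nat.lt_trichotomy i j with h | h | h
  · exact absurd (onCycle_of_iterMap_eq h hi hj) (not_onCycle_of_iterMap_base hb hi)
  · exact h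
  · exact absurd (onCycle_of_iterMap_eq h hj hi) (not_onCycle_of_iterMap_base hb hi)

theorem pathLength_le (hb : ∃ k, iterMap n f k b = none) : pathLength b f ≤ n :=
  Nat.sInf_le (iterMap_eq_none_of_not_onCycle fun _ _ => not_onCycle_of_iterMap_base hb)

theorem lastIndex_pos_iff (hb : ∃ k, iterMap n f k b = none) :
    0 < lastIndex b f ↔ (f b).isSome := by
  constructor
  · intro h
    obtain ⟨v, hv⟩ := exists_iterMap_eq_some_of_lt_pathLength (f := f) (b := b) (i := 1)
      (by rw [← lastIndex_add_one hb]; omega)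
    rw [iterMap_one] at hv
    rw [hv]; rfl
  · refine fun hd => Nat.pos_of_ne_zero fun h => ?_
    have h2 := iterMap_lastIndex hb
    rw [h, iterMap_zero, Option.some_inj] at h2
    rw [h2, apply_pathEnd hb] at hd
    cases hd

end Path

section Splice

variable {n : ℕ} {f : Fin n → Option (Fin n)} {a c x : Fin n}

variable (f a c) in
def splice : Fin n → Option (Fin n) :=
  fun x => if x = a then f c else if x = c then none else f x

theorem splice_apply_left : splice f a c a = f c := if_pos rfl

theorem splice_apply_right (h : c ≠ a) : splice f a c c = none := by
  simp [splice, h]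

theorem splice_apply_of_ne (ha : x ≠ a) (hc : x ≠ c) : splice f a c x = f x := by
  simp [splice, ha, hc]

theorem IsPInj.splice (hf : IsPInj n f) : IsPInj n (splice f a c) := by
  intro x y z hx hy
  simp only [_root_.splice] at hx hy
  split_ifs at hx hy <;> grind [IsPInj]

theorem splice_splice (ha : f a = none) : splice (splice f a c) c a = f := by
  funext x
  simp only [splice]
  split_ifs <;> grind

end Splice

section Surgery

variable {n : ℕ} (b : Fin n) (f : Fin n → Option (Fin n))

noncomputable def maxCyclePoint : Fin n :=
  if h : (cyclePoints f).Nonempty then (cyclePoints f).max' h else b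

noncomputable def absorbCycle : Fin n → Option (Fin n) :=
  if (cyclePoints f).Nonempty then splice f (pathEnd b f) (maxCyclePoint b f) else f

-- `0` when no point of the chain exceeds its end: the cut is then made right after `b`.
noncomputable def cutIndex : ℕ :=
  Nat.findGreatest (fun i => ∃ u, iterMap n f i b = some u ∧ pathEnd b f < u) (lastIndex b f)

noncomputable def cutPoint : Fin n := (iterMap n f (cutIndex b f) b).getD b

noncomputable def detachCycle : Fin n → Option (Fin n) :=
  if (f b).isSome then splice f (pathEnd b f) (cutPoint b f) else f

structure Admissible : Prop where
  isPInj : IsPInj n f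
  path_finite : ∃ k, iterMap n f k b = none
  lt_pathEnd : (f b).isSome → ∀ x, OnCycle f x → x < pathEnd b f

variable {b f}

theorem maxCyclePoint_onCycle (hC : (cyclePoints f).Nonempty) : OnCycle f (maxCyclePoint b f) := by
  rw [maxCyclePoint, dif_pos hC, ← mem_cyclePoints]
  exact Finset.max'_mem _ hC

theorem le_maxCyclePoint {x : Fin n} (hx : OnCycle f x) : x ≤ maxCyclePoint b f := by
  have hC : (cyclePoints f).Nonempty := ⟨x, mem_cyclePoints.mpr hx⟩
  rw [maxCyclePoint, dif_pos hC]
  exact Finset.le_max' _ x (mem_cyclePoints.mpr hx)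

theorem absorbCycle_eq (hC : (cyclePoints f).Nonempty) :
    absorbCycle b f = splice f (pathEnd b f) (maxCyclePoint b f) :=
  if_pos hC

theorem detachCycle_eq (hd : (f b).isSome) :
    detachCycle b f = splice f (pathEnd b f) (cutPoint b f) :=
  if_pos hd

end Surgery

section Absorb

variable {n : ℕ} {b : Fin n} {f : Fin n → Option (Fin n)}
variable (hA : Admissible b f) (hC : (cyclePoints f).Nonempty)
include hA hC

theorem pathEnd_ne_maxCyclePoint : pathEnd b f ≠ maxCyclePoint b f := fun h =>
  not_onCycle_of_iterMap_base hA.path_finite (iterMap_lastIndex hA.path_finite)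
    (h ▸ maxCyclePoint_onCycle hC)

theorem iterMap_absorbCycle_of_le {i : ℕ} (hi : i ≤ lastIndex b f) :
    iterMap n (absorbCycle b f) i b = iterMap n f i b := by
  refine iterMap_congr (fun j hj w hw => ?_) i hi
  have hb := hA.path_finite
  rw [absorbCycle_eq hC, splice_apply_of_ne]
  · rintro rfl
    exact hj.ne (iterMap_base_inj hb hw (iterMap_lastIndex hb))
  · rintro rfl
    exact not_onCycle_of_iterMap_base hb hw (maxCyclePoint_onCycle hC)

theorem iterMap_absorbCycle_lastIndex_add {j : ℕ} (hj : j < period f (maxCyclePoint b f)) :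
    iterMap n (absorbCycle b f) (lastIndex b f + 1 + j) b =
      iterMap n f (j + 1) (maxCyclePoint b f) := by
  have hb := hA.path_finite
  have hm := maxCyclePoint_onCycle (b := b) hC
  induction j with
  | zero =>
    rw [Nat.add_zero, iterMap_succ', iterMap_absorbCycle_of_le hA hC le_rfl,
      iterMap_lastIndex hb, Option.bind_some, iterMap_one, absorbCycle_eq hC,
      splice_apply_left]
  | succ j ih =>
    rw [← Nat.add_assoc, iterMap_succ', ih (by omega), iterMap_succ' f (j + 1)]
    obtain ⟨w, hw⟩ := hm.exists_iterMap_eq_some (j + 1)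
    rw [hw, Option.bind_some, Option.bind_some, absorbCycle_eq hC, splice_apply_of_ne]
    · rintro rfl
      exact not_onCycle_of_iterMap_base hb (iterMap_lastIndex hb) (hm.of_iterMap_eq_some hw)
    · rintro rfl
      exact iterMap_ne_self_of_lt_period (by omega) (by omega) hw

theorem iterMap_absorbCycle_maxCyclePoint :
    iterMap n (absorbCycle b f) (lastIndex b f + period f (maxCyclePoint b f)) b =
      some (maxCyclePoint b f) := by
  have hm := maxCyclePoint_onCycle (b := b) hC
  have hp := hm.period_pos
  have h := iterMap_absorbCycle_lastIndex_add hA hC (j := period f (maxCyclePoint b f) - 1)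
    (by omega)
  rwa [Nat.sub_add_cancel hp, hm.iterMap_period, Nat.add_assoc,
    Nat.add_sub_cancel' hp] at h

theorem iterMap_absorbCycle_eq_none :
    iterMap n (absorbCycle b f) (lastIndex b f + period f (maxCyclePoint b f) + 1) b = none := by
  rw [iterMap_succ', iterMap_absorbCycle_maxCyclePoint hA hC, Option.bind_some,
    absorbCycle_eq hC, splice_apply_right (pathEnd_ne_maxCyclePoint hA hC).symm]

theorem lastIndex_absorbCycle :
    lastIndex b (absorbCycle b f) = lastIndex b f + period f (maxCyclePoint b f) := by
  have hb := hA.path_finite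
  have hm := maxCyclePoint_onCycle (b := b) hC
  suffices pathLength b (absorbCycle b f) = lastIndex b f + period f (maxCyclePoint b f) + 1 by
    rw [lastIndex, this, Nat.add_sub_cancel]
  refine pathLength_eq (iterMap_absorbCycle_eq_none hA hC) fun i hi => ?_
  rcases le_or_gt i (lastIndex b f) with h | h
  · rw [iterMap_absorbCycle_of_le hA hC h]
    exact exists_iterMap_eq_some_of_lt_pathLength (by rw [← lastIndex_add_one hb]; omega)
  · obtain ⟨j, rfl⟩ := Nat.exists_eq_add_of_lt h
    rw [Nat.add_right_comm, iterMap_absorbCycle_lastIndex_add hA hC (by omega)]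
    exact hm.exists_iterMap_eq_some _

theorem pathEnd_absorbCycle : pathEnd b (absorbCycle b f) = maxCyclePoint b f := by
  rw [pathEnd, lastIndex_absorbCycle hA hC, iterMap_absorbCycle_maxCyclePoint hA hC,
    Option.getD_some]

theorem onCycle_of_onCycle_absorbCycle {x : Fin n} (hx : OnCycle (absorbCycle b f) x) :
    OnCycle f x ∧ x < maxCyclePoint b f := by
  have hb' : ∃ k, iterMap n (absorbCycle b f) k b = none :=
    ⟨_, iterMap_absorbCycle_eq_none hA hC⟩
  have he : ¬ OnCycle (absorbCycle b f) (pathEnd b f) := not_onCycle_of_iterMap_base hb'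
    ((iterMap_absorbCycle_of_le hA hC le_rfl).trans (iterMap_lastIndex hA.path_finite))
  have hm : ¬ OnCycle (absorbCycle b f) (maxCyclePoint b f) :=
    not_onCycle_of_iterMap_base hb' (iterMap_absorbCycle_maxCyclePoint hA hC)
  obtain ⟨k, hk, hxk⟩ := hx
  have hfx : OnCycle f x := by
    refine ⟨k, hk, (iterMap_congr (fun i _ w hw => ?_) k le_rfl).trans hxk⟩
    have hw' := (show OnCycle (absorbCycle b f) x from ⟨k, hk, hxk⟩).of_iterMap_eq_some hw
    rw [absorbCycle_eq hC, splice_apply_of_ne (by rintro rfl; exact he hw')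
      (by rintro rfl; exact hm hw')]
  refine ⟨hfx, (le_maxCyclePoint hfx).lt_of_ne ?_⟩
  rintro rfl
  exact hm ⟨k, hk, hxk⟩

theorem admissible_absorbCycle : Admissible b (absorbCycle b f) where
  isPInj := absorbCycle_eq hC ▸ hA.isPInj.splice
  path_finite := ⟨_, iterMap_absorbCycle_eq_none hA hC⟩
  lt_pathEnd _ _ hx := pathEnd_absorbCycle hA hC ▸ (onCycle_of_onCycle_absorbCycle hA hC hx).2

theorem card_cyclePoints_absorbCycle_lt :
    (cyclePoints (absorbCycle b f)).card < (cyclePoints f).card := by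
  refine Finset.card_lt_card ⟨fun x hx => ?_, fun h => ?_⟩
  · rw [mem_cyclePoints] at hx ⊢
    exact (onCycle_of_onCycle_absorbCycle hA hC hx).1
  · have := mem_cyclePoints.mp (h (mem_cyclePoints.mpr (maxCyclePoint_onCycle (b := b) hC)))
    exact lt_irrefl _ (onCycle_of_onCycle_absorbCycle hA hC this).2

theorem cutIndex_absorbCycle : cutIndex b (absorbCycle b f) = lastIndex b f := by
  have hb := hA.path_finite
  have hm := maxCyclePoint_onCycle (b := b) hC
  rw [cutIndex, Nat.findGreatest_eq_iff, lastIndex_absorbCycle hA hC, pathEnd_absorbCycle hA hC]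
  refine ⟨by omega, fun hT => ?_, fun i hi hi' ⟨u, hu, hmu⟩ => ?_⟩
  · refine ⟨pathEnd b f, ?_, hA.lt_pathEnd ?_ _ hm⟩
    · rw [iterMap_absorbCycle_of_le hA hC le_rfl, iterMap_lastIndex hb]
    · exact (lastIndex_pos_iff hb).mp (Nat.pos_of_ne_zero hT)
  · obtain ⟨j, rfl⟩ := Nat.exists_eq_add_of_lt hi
    rw [Nat.add_right_comm, iterMap_absorbCycle_lastIndex_add hA hC (by omega)] at hu
    exact (le_maxCyclePoint (hm.of_iterMap_eq_some hu)).not_gt hmu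

theorem cutPoint_absorbCycle : cutPoint b (absorbCycle b f) = pathEnd b f := by
  rw [cutPoint, cutIndex_absorbCycle hA hC, iterMap_absorbCycle_of_le hA hC le_rfl,
    iterMap_lastIndex hA.path_finite, Option.getD_some]

theorem isSome_absorbCycle_base : (absorbCycle b f b).isSome := by
  have hp := (maxCyclePoint_onCycle (b := b) hC).period_pos
  have hb' : ∃ k, iterMap n (absorbCycle b f) k b = none :=
    ⟨_, iterMap_absorbCycle_eq_none hA hC⟩
  rw [← lastIndex_pos_iff hb', lastIndex_absorbCycle hA hC]
  omega

theorem detachCycle_absorbCycle : detachCycle b (absorbCycle b f) = f := by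
  rw [detachCycle, if_pos (isSome_absorbCycle_base hA hC), pathEnd_absorbCycle hA hC,
    cutPoint_absorbCycle hA hC, absorbCycle_eq hC, splice_splice (apply_pathEnd hA.path_finite)]

end Absorb

section Detach

variable {n : ℕ} {b : Fin n} {f : Fin n → Option (Fin n)}

theorem cutIndex_le_lastIndex : cutIndex b f ≤ lastIndex b f := Nat.findGreatest_le _

theorem exists_iterMap_cutIndex_gt (h : 0 < cutIndex b f) :
    ∃ u, iterMap n f (cutIndex b f) b = some u ∧ pathEnd b f < u :=
  (Nat.findGreatest_eq_iff.mp rfl).2.1 h.ne'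

theorem le_pathEnd_of_cutIndex_lt {j : ℕ} {u : Fin n} (hj : cutIndex b f < j)
    (hjT : j ≤ lastIndex b f) (hu : iterMap n f j b = some u) : u ≤ pathEnd b f :=
  not_lt.mp fun h => Nat.findGreatest_is_greatest hj hjT ⟨u, hu, h⟩

theorem iterMap_cutIndex (hb : ∃ k, iterMap n f k b = none) :
    iterMap n f (cutIndex b f) b = some (cutPoint b f) := by
  obtain ⟨v, hv⟩ := exists_iterMap_eq_some_of_lt_pathLength (f := f) (b := b)
    (i := cutIndex b f)
    (by rw [← lastIndex_add_one hb]; exact Nat.lt_succ_of_le cutIndex_le_lastIndex)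
  rw [cutPoint, hv, Option.getD_some]

theorem pathEnd_lt_cutPoint (hb : ∃ k, iterMap n f k b = none) (h : 0 < cutIndex b f) :
    pathEnd b f < cutPoint b f := by
  obtain ⟨u, hu, hlt⟩ := exists_iterMap_cutIndex_gt h
  rw [iterMap_cutIndex hb, Option.some_inj] at hu
  rwa [hu]

variable (hA : Admissible b f) (hd : (f b).isSome)
include hA hd

theorem cutIndex_lt_lastIndex : cutIndex b f < lastIndex b f := by
  have hb := hA.path_finite
  refine cutIndex_le_lastIndex.lt_of_ne fun h => ?_
  rcases Nat.eq_zero_or_pos (cutIndex b f) with h0 | h0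
  · exact ((lastIndex_pos_iff hb).mpr hd).ne (h0.symm.trans h)
  · obtain ⟨u, hu, hlt⟩ := exists_iterMap_cutIndex_gt h0
    rw [h, iterMap_lastIndex hb, Option.some_inj] at hu
    exact hlt.ne hu

theorem cutPoint_ne_pathEnd : cutPoint b f ≠ pathEnd b f := fun h =>
  (cutIndex_lt_lastIndex hA hd).ne <| iterMap_base_inj hA.path_finite
    (iterMap_cutIndex hA.path_finite) (h ▸ iterMap_lastIndex hA.path_finite)

theorem detachCycle_pathEnd :
    detachCycle b f (pathEnd b f) = iterMap n f (cutIndex b f + 1) b := by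
  rw [detachCycle_eq hd, splice_apply_left, iterMap_succ', iterMap_cutIndex hA.path_finite,
    Option.bind_some]

theorem detachCycle_apply_of_cutIndex_lt {j : ℕ} {u : Fin n} (hj : cutIndex b f < j)
    (hjT : j < lastIndex b f) (hu : iterMap n f j b = some u) : detachCycle b f u = f u := by
  have hb := hA.path_finite
  rw [detachCycle_eq hd, splice_apply_of_ne]
  · rintro rfl
    exact hjT.ne (iterMap_base_inj hb hu (iterMap_lastIndex hb))
  · rintro rfl
    exact hj.ne' (iterMap_base_inj hb hu (iterMap_cutIndex hb))

theorem iterMap_detachCycle_pathEnd {l : ℕ} (hl : cutIndex b f + 1 + l ≤ lastIndex b f) :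
    iterMap n (detachCycle b f) (l + 1) (pathEnd b f) = iterMap n f (cutIndex b f + 1 + l) b := by
  induction l with
  | zero => rw [iterMap_one, detachCycle_pathEnd hA hd]
  | succ l ih =>
    rw [iterMap_succ', ih (by omega), ← Nat.add_assoc, iterMap_succ' f]
    obtain ⟨u, hu⟩ := exists_iterMap_eq_some_of_lt_pathLength (f := f) (b := b)
      (i := cutIndex b f + 1 + l) (by rw [← lastIndex_add_one hA.path_finite]; omega)
    rw [hu, Option.bind_some, Option.bind_some,
      detachCycle_apply_of_cutIndex_lt hA hd (by omega) (by omega) hu]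

theorem onCycle_detachCycle_pathEnd : OnCycle (detachCycle b f) (pathEnd b f) := by
  have hk := cutIndex_lt_lastIndex hA hd
  refine ⟨lastIndex b f - cutIndex b f, by omega, ?_⟩
  have h := iterMap_detachCycle_pathEnd hA hd (l := lastIndex b f - cutIndex b f - 1) (by omega)
  rwa [show lastIndex b f - cutIndex b f - 1 + 1 = lastIndex b f - cutIndex b f by omega,
    show cutIndex b f + 1 + (lastIndex b f - cutIndex b f - 1) = lastIndex b f by omega,
    iterMap_lastIndex hA.path_finite] at h

theorem exists_iterMap_detachCycle_pathEnd (l : ℕ) : ∃ j, cutIndex b f < j ∧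
    j ≤ lastIndex b f ∧ iterMap n (detachCycle b f) l (pathEnd b f) = iterMap n f j b := by
  have hb := hA.path_finite
  induction l with
  | zero =>
    exact ⟨lastIndex b f, cutIndex_lt_lastIndex hA hd, le_rfl, (iterMap_lastIndex hb).symm⟩
  | succ l ih =>
    obtain ⟨j, hj, hjT, hl⟩ := ih
    obtain ⟨u, hu⟩ := exists_iterMap_eq_some_of_lt_pathLength (f := f) (b := b) (i := j)
      (by rw [← lastIndex_add_one hb]; omega)
    rw [iterMap_succ', hl, hu, Option.bind_some]
    rcases hjT.eq_or_lt with rfl | hjT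
    · rw [iterMap_lastIndex hb, Option.some_inj] at hu
      exact ⟨cutIndex b f + 1, by omega, cutIndex_lt_lastIndex hA hd,
        hu ▸ detachCycle_pathEnd hA hd⟩
    · refine ⟨j + 1, by omega, hjT, ?_⟩
      rw [detachCycle_apply_of_cutIndex_lt hA hd hj hjT hu, iterMap_succ', hu, Option.bind_some]

theorem le_pathEnd_of_onCycle_detachCycle {x : Fin n} (hx : OnCycle (detachCycle b f) x) :
    x ≤ pathEnd b f := by
  by_cases hE : ∃ l, iterMap n (detachCycle b f) l x = some (pathEnd b f)
  · obtain ⟨l, hl⟩ := hE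
    obtain ⟨l', hl'⟩ := hx.exists_iterMap_eq_some_of_iterMap_eq_some hl
    obtain ⟨j, hj, hjT, hxj⟩ := exists_iterMap_detachCycle_pathEnd hA hd l'
    rw [hl'] at hxj
    exact le_pathEnd_of_cutIndex_lt hj hjT hxj.symm
  · push Not at hE
    refine (hA.lt_pathEnd hd x ?_).le
    obtain ⟨k, hk, hxk⟩ := hx
    refine ⟨k, hk, (iterMap_congr (fun i _ w hw => ?_) k le_rfl).trans hxk⟩
    have hw' := (show OnCycle (detachCycle b f) x from ⟨k, hk, hxk⟩).of_iterMap_eq_some hw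
    rw [detachCycle_eq hd, splice_apply_of_ne (by rintro rfl; exact hE i hw)]
    rintro rfl
    have := hw'.isSome_apply
    rw [detachCycle_eq hd, splice_apply_right (cutPoint_ne_pathEnd hA hd)] at this
    cases this

theorem iterMap_detachCycle_of_le {i : ℕ} (hi : i ≤ cutIndex b f) :
    iterMap n (detachCycle b f) i b = iterMap n f i b := by
  have hb := hA.path_finite
  refine iterMap_congr (fun j hj w hw => ?_) i hi
  rw [detachCycle_eq hd, splice_apply_of_ne]
  · rintro rfl
    have := cutIndex_lt_lastIndex hA hd
    exact (hj.trans this).ne (iterMap_base_inj hb hw (iterMap_lastIndex hb))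
  · rintro rfl
    exact hj.ne (iterMap_base_inj hb hw (iterMap_cutIndex hb))

theorem iterMap_detachCycle_eq_none :
    iterMap n (detachCycle b f) (cutIndex b f + 1) b = none := by
  rw [iterMap_succ', iterMap_detachCycle_of_le hA hd le_rfl, iterMap_cutIndex hA.path_finite,
    Option.bind_some, detachCycle_eq hd, splice_apply_right (cutPoint_ne_pathEnd hA hd)]

theorem pathLength_detachCycle : pathLength b (detachCycle b f) = cutIndex b f + 1 := by
  refine pathLength_eq (iterMap_detachCycle_eq_none hA hd) fun i hi => ?_
  rw [iterMap_detachCycle_of_le hA hd (by omega)]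
  exact exists_iterMap_eq_some_of_lt_pathLength
    (by have := cutIndex_lt_lastIndex hA hd; rw [← lastIndex_add_one hA.path_finite]; omega)

theorem pathEnd_detachCycle : pathEnd b (detachCycle b f) = cutPoint b f := by
  rw [pathEnd, lastIndex, pathLength_detachCycle hA hd, Nat.add_sub_cancel,
    iterMap_detachCycle_of_le hA hd le_rfl, iterMap_cutIndex hA.path_finite, Option.getD_some]

theorem cutIndex_pos_of_isSome_detachCycle (hd' : (detachCycle b f b).isSome) :
    0 < cutIndex b f := by
  refine Nat.pos_of_ne_zero fun h => ?_
  have hc := iterMap_cutIndex hA.path_finite (b := b)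
  rw [h, iterMap_zero, Option.some_inj] at hc
  have hnone : detachCycle b f (cutPoint b f) = none := by
    rw [detachCycle_eq hd, splice_apply_right (cutPoint_ne_pathEnd hA hd)]
  rw [← hc] at hnone
  simp [hnone] at hd'

theorem admissible_detachCycle : Admissible b (detachCycle b f) where
  isPInj := detachCycle_eq hd ▸ hA.isPInj.splice
  path_finite := ⟨_, iterMap_detachCycle_eq_none hA hd⟩
  lt_pathEnd hd' _ hx := by
    rw [pathEnd_detachCycle hA hd]
    exact (le_pathEnd_of_onCycle_detachCycle hA hd hx).trans_lt
      (pathEnd_lt_cutPoint hA.path_finite (cutIndex_pos_of_isSome_detachCycle hA hd hd'))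

theorem maxCyclePoint_detachCycle : maxCyclePoint b (detachCycle b f) = pathEnd b f :=
  le_antisymm (le_pathEnd_of_onCycle_detachCycle hA hd
      (maxCyclePoint_onCycle ⟨_, mem_cyclePoints.mpr (onCycle_detachCycle_pathEnd hA hd)⟩))
    (le_maxCyclePoint (onCycle_detachCycle_pathEnd hA hd))

theorem absorbCycle_detachCycle : absorbCycle b (detachCycle b f) = f := by
  rw [absorbCycle_eq ⟨_, mem_cyclePoints.mpr (onCycle_detachCycle_pathEnd hA hd)⟩,
    pathEnd_detachCycle hA hd, maxCyclePoint_detachCycle hA hd, detachCycle_eq hd,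
    splice_splice (apply_pathEnd hA.path_finite)]

theorem pathLength_detachCycle_lt : pathLength b (detachCycle b f) < pathLength b f := by
  rw [pathLength_detachCycle hA hd, ← lastIndex_add_one hA.path_finite]
  have := cutIndex_lt_lastIndex hA hd
  omega

end Detach

section Counting

variable {n : ℕ}

theorem admissible_of_apply_base_eq_none {b : Fin n} {f : Fin n → Option (Fin n)}
    (hf : IsPInj n f) (h : f b = none) : Admissible b f where
  isPInj := hf
  path_finite := ⟨1, by rw [iterMap_one, h]⟩
  lt_pathEnd hd := by rw [h] at hd; cases hd

theorem admissible_of_cyclePoints_eq_empty {b : Fin n} {f : Fin n → Option (Fin n)}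
    (hf : IsPInj n f) (h : cyclePoints f = ∅) : Admissible b f where
  isPInj := hf
  path_finite := ⟨n, iterMap_eq_none_of_cyclePoints_eq_empty h b⟩
  lt_pathEnd _ x hx := by simpa [h] using mem_cyclePoints.mpr hx

theorem bijOn_iterate_absorbCycle (b : Fin n) :
    Set.BijOn (absorbCycle b)^[n] {f | IsPInj n f ∧ f b = none}
      {f | IsPInj n f ∧ cyclePoints f = ∅} := by
  have hsrc : {f | IsPInj n f ∧ f b = none} = {f | Admissible b f ∧ ¬ (f b).isSome} := by
    ext f
    simp only [Set.mem_ofPred_eq, Option.not_isSome_iff_eq_none]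
    exact ⟨fun ⟨hf, h0⟩ => ⟨admissible_of_apply_base_eq_none hf h0, h0⟩,
      fun ⟨hA, h0⟩ => ⟨hA.isPInj, h0⟩⟩
  have htgt : {f | IsPInj n f ∧ cyclePoints f = ∅} =
      {f | Admissible b f ∧ ¬ (cyclePoints f).Nonempty} := by
    ext f
    simp only [Set.mem_ofPred_eq, Finset.not_nonempty_iff_eq_empty]
    exact ⟨fun ⟨hf, h0⟩ => ⟨admissible_of_cyclePoints_eq_empty hf h0, h0⟩,
      fun ⟨hA, h0⟩ => ⟨hA.isPInj, h0⟩⟩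
  rw [hsrc, htgt]
  refine bijOn_iterate (S := {f | Admissible b f}) (F := absorbCycle b) (G := detachCycle b)
    (fun f hA => ?_) (fun f hA => ?_) (fun _ hC => if_neg hC) (fun _ hd => if_neg hd)
    (fun _ hA hC => detachCycle_absorbCycle hA hC) (fun _ hA hd => absorbCycle_detachCycle hA hd)
    (fun f => (cyclePoints f).card) (pathLength b)
    (fun _ hA hC => card_cyclePoints_absorbCycle_lt hA hC)
    (fun _ hA hd => pathLength_detachCycle_lt hA hd)
    (fun f _ => (Finset.card_le_univ (cyclePoints f)).trans_eq (Fintype.card_fin n))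
    (fun _ hA => pathLength_le hA.path_finite)
  · by_cases hC : (cyclePoints f).Nonempty
    · exact admissible_absorbCycle hA hC
    · rwa [Set.mem_ofPred_eq, absorbCycle, if_neg hC]
  · by_cases hd : (f b).isSome
    · exact admissible_detachCycle hA hd
    · rwa [Set.mem_ofPred_eq, detachCycle, if_neg hd]

theorem nilpotent_iff_cyclePoints_eq_empty (α : PInj n) :
    Nilpotent n α ↔ cyclePoints α.val = ∅ := by
  refine ⟨fun ⟨k, _, hk⟩ => Finset.eq_empty_of_forall_notMem fun x hx =>
      not_onCycle_of_iterMap_eq_none (hk x) (mem_cyclePoints.mp hx),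
    fun h => ⟨n + 1, n.succ_pos, ?_⟩⟩
  intro x
  rw [iterMap_succ', iterMap_eq_none_of_cyclePoints_eq_empty h, Option.bind_none]

theorem ncard_setOf_pInj (p : (Fin n → Option (Fin n)) → Prop) :
    {α : PInj n | p α.val}.ncard = {f | IsPInj n f ∧ p f}.ncard := by
  rw [← Set.ncard_image_of_injective (f := fun α : PInj n => α.val) _ Subtype.val_injective]
  congr 1
  ext f
  exact ⟨fun ⟨α, hα, hf⟩ => hf ▸ ⟨α.2, hα⟩,
    fun ⟨hf, hp⟩ => ⟨⟨f, hf⟩, hp, rfl⟩⟩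

end Counting

theorem stmt11 (n : ℕ) (h : 0 < n) :
    Set.ncard {α : PInj n | α.val ⟨0, h⟩ = none}
      = Set.ncard {α : PInj n | Nilpotent n α} := by
  simp only [nilpotent_iff_cyclePoints_eq_empty]
  rw [ncard_setOf_pInj (· ⟨0, h⟩ = none), ncard_setOf_pInj (cyclePoints · = ∅)]
  exact (bijOn_iterate_absorbCycle ⟨0, h⟩).ncard_eq
end
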